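/- Let M be a partial order and B₁, B₂ ∈ CWT(M). If B₁ ≤*_M B₂ and Y is a front of B₁, then there is B₂' ∈ sb(B₂) such that Y ∩ B₂' is a front of B₂' and (B₁)_{≥η} ≤*_M (B₂')_{≥η} for every η ∈ Y ∩ B₂'. -/

import Mathlib

open Set Cardinal

universe u

variable {α : Type u}

section OrderDefs

variable [PartialOrder α]

/-- `η` and `ν` are compatible in `M`: they have a common `≤`-upper bound in `M`. -/
def Compat (M : Set α) (η ν : α) : Prop :=
  ∃ ρ ∈ M, η ≤ ρ ∧ ν ≤ ρ

/-- The set of immediate successors of `ν` inside `B`. -/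
def succIn (B : Set α) (ν : α) : Set α :=
  {ρ ∈ B | ν < ρ ∧ ¬∃ σ ∈ B, ν < σ ∧ σ < ρ}

/-- The set of maximal elements of `B`. -/
def maxIn (B : Set α) : Set α :=
  {η ∈ B | ∀ ν ∈ B, ¬η < ν}

/-- `r` is the root (least element) of `B`. -/
def IsRoot (B : Set α) (r : α) : Prop :=
  r ∈ B ∧ ∀ x ∈ B, r ≤ x

/-- `B` is a countable well-founded subtree of `M`. -/
def CWT (M B : Set α) : Prop :=
  B ⊆ M ∧ B.Countable ∧ (∃ r, IsRoot B r) ∧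
  (∀ ν ∈ B, ∀ η ∈ B, ∀ ρ ∈ B, η ≤ ν → ρ ≤ ν → η ≤ ρ ∨ ρ ≤ η) ∧
  (∀ C, C ⊆ B → IsChain (· ≤ ·) C → C.Finite) ∧
  (∀ ν ∈ B, succIn B ν = ∅ ∨ (succIn B ν).Infinite) ∧
  (∀ η ∈ B, ∀ ν ∈ B, ¬η ≤ ν → ¬ν ≤ η → ¬Compat M η ν) ∧
  (∀ ν ∈ B \ maxIn B, ∀ F : Finset α, (F : Set α) ⊆ M \ {ρ | ρ ≤ ν} →
    {ϱ ∈ succIn B ν | ∀ ρ ∈ F, ¬Compat M ρ ϱ}.Infinite)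

/-- `Y` is a front of `B`: a maximal set of pairwise incomparable members of `B`. -/
def IsFront (B Y : Set α) : Prop :=
  Y ⊆ B ∧ (∀ η ∈ Y, ∀ ν ∈ Y, η ≠ ν → ¬η ≤ ν) ∧
  (∀ ν ∈ B, ∃ η ∈ Y, η ≤ ν ∨ ν ≤ η)

/-- `B'` is an exhaustive subtree of `B`. -/
def sb (M B B' : Set α) : Prop :=
  CWT M B' ∧ B' ⊆ B ∧ (∃ r, IsRoot B r ∧ IsRoot B' r) ∧
  ∀ ν ∈ B', succIn B' ν ⊆ succIn B ν ∧ (succIn B ν \ succIn B' ν).Finite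

/-- `B'` is a positive subtree of `B`. -/
def psb (M B B' : Set α) : Prop :=
  CWT M B' ∧ B' ⊆ B ∧ (∃ r, IsRoot B r ∧ IsRoot B' r) ∧
  ∀ ν ∈ B' \ maxIn B, (succIn B' ν).Infinite ∧ succIn B' ν ⊆ succIn B ν

/-- `Y` is an almost front of `B`: an antichain of `M` whose intersection with some
exhaustive subtree `B'` of `B` is a front of `B'`. -/
def IsAlmostFront (M B Y : Set α) : Prop :=
  Y ⊆ M ∧ (∀ η ∈ Y, ∀ ν ∈ Y, η ≠ ν → ¬η ≤ ν) ∧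
  ∃ B', sb M B B' ∧ IsFront B' (Y ∩ B')

/-- The relation `B₁ ≤*_M B₂`. -/
def leStar (M B₁ B₂ : Set α) : Prop :=
  CWT M B₁ ∧ CWT M B₂ ∧ (∃ r, IsRoot B₁ r ∧ IsRoot B₂ r) ∧
  ∃ B₂', sb M B₂ B₂' ∧ psb M B₁ (B₂' ∩ B₁) ∧
    ∀ Y, IsAlmostFront M (B₂' ∩ B₁) Y → IsAlmostFront M B₂ Y

end OrderDefs

/-!
Unfolding `B₁ ≤*_M B₂` and transferring the front of leaves of `B₂' ∩ B₁` to `B₂` yields an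
exhaustive subtree `W` of `B₂` with the same root as `B₁`, in which the leaves of `B₁` form a
front and `W ∩ B₁` is closed downwards in `B₁`. In that situation every immediate successor in `W`
of a non-leaf `q` of `W ∩ B₁` lies below an immediate successor of `q` in `W ∩ B₁`, and distinct
successors go to distinct ones. Hence `W ∩ B₁` is a positive subtree of `B₁`, and an almost front
of `W ∩ B₁`, witnessed by `F ∈ sb(W ∩ B₁)`, is an almost front of `W`, witnessed by the part of
`W` lying below `F` or above a leaf of `F`: at each node only the successors sent outside `F` are
discarded, and there are finitely many of them. So `B₁ ≤*_M W`; the same situation holds in every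
cone `W_{≥η}`, `η ∈ W ∩ B₁`, and a front of `B₁` meets `W` in a front of `W` because every leaf of
`W` lies above a leaf of `B₁`.
-/

open Set

section Trees

variable [PartialOrder α] {M B S T : Set α}

def IsLowerIn (B S : Set α) : Prop :=
  ∀ x ∈ B, ∀ y ∈ S, x ≤ y → x ∈ S

theorem IsRoot.eq {r r' : α} (h : IsRoot B r) (h' : IsRoot B r') : r = r' :=
  le_antisymm (h.2 r' h'.1) (h'.2 r h.1)

theorem isRoot_cone {η : α} (hη : η ∈ B) : IsRoot (B ∩ {ρ | η ≤ ρ}) η :=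
  ⟨⟨hη, le_rfl⟩, fun _ hx => hx.2⟩

theorem eq_of_mem_maxIn {η ν : α} (hη : η ∈ maxIn B) (hν : ν ∈ B) (h : η ≤ ν) : η = ν :=
  h.eq_or_lt.resolve_right (hη.2 ν hν)

theorem mem_maxIn_of_subset {μ : α} (hμ : μ ∈ maxIn B) (hμS : μ ∈ S) (hSB : S ⊆ B) :
    μ ∈ maxIn S :=
  ⟨hμS, fun x hx => hμ.2 x (hSB hx)⟩

theorem isAntichain_maxIn : IsAntichain (· ≤ ·) (maxIn B) :=
  fun _ ha _ hb hne hab => ha.2 _ hb.1 (hab.lt_of_ne hne)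

theorem maxIn_inter_cone {η : α} : maxIn (B ∩ {ρ | η ≤ ρ}) = maxIn B ∩ {ρ | η ≤ ρ} := by
  ext ν
  constructor
  · rintro ⟨hν, hmax⟩
    exact ⟨⟨hν.1, fun x hx hνx => hmax x ⟨hx, hν.2.trans hνx.le⟩ hνx⟩, hν.2⟩
  · rintro ⟨⟨hν, hmax⟩, hην⟩
    exact ⟨⟨hν, hην⟩, fun x hx => hmax x hx.1⟩

theorem succIn_inter_cone {η ν : α} (hν : ν ∈ B ∩ {ρ | η ≤ ρ}) :
    succIn (B ∩ {ρ | η ≤ ρ}) ν = succIn B ν := by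
  ext x
  constructor
  · rintro ⟨⟨hxB, _⟩, hνx, hnone⟩
    exact ⟨hxB, hνx, fun ⟨e, heB, hνe, hex⟩ => hnone ⟨e, ⟨heB, hν.2.trans hνe.le⟩, hνe, hex⟩⟩
  · rintro ⟨hxB, hνx, hnone⟩
    exact ⟨⟨hxB, hν.2.trans hνx.le⟩, hνx, fun ⟨e, he, hνe, hex⟩ => hnone ⟨e, he.1, hνe, hex⟩⟩

theorem succIn_eq_inter_of_isLowerIn (hSB : S ⊆ B) (hS : IsLowerIn B S) (ν : α) :
    succIn S ν = succIn B ν ∩ S := by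
  ext x
  constructor
  · rintro ⟨hxS, hνx, hnone⟩
    exact ⟨⟨hSB hxS, hνx, fun ⟨e, heB, hνe, hex⟩ =>
      hnone ⟨e, hS e heB x hxS hex.le, hνe, hex⟩⟩, hxS⟩
  · rintro ⟨⟨-, hνx, hnone⟩, hxS⟩
    exact ⟨hxS, hνx, fun ⟨e, heS, hνe, hex⟩ => hnone ⟨e, hSB heS, hνe, hex⟩⟩

theorem IsChain.exists_isGreatest (hch : IsChain (· ≤ ·) T) (hfin : T.Finite)
    (hne : T.Nonempty) : ∃ m, IsGreatest T m := by
  obtain ⟨m, hm⟩ := hfin.exists_maximal hne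
  exact ⟨m, hm.prop, fun x hx => (hch.total hx hm.prop).elim id (hm.le_of_ge hx)⟩

theorem IsChain.exists_isLeast (hch : IsChain (· ≤ ·) T) (hfin : T.Finite)
    (hne : T.Nonempty) : ∃ m, IsLeast T m := by
  obtain ⟨m, hm⟩ := hfin.exists_minimal hne
  exact ⟨m, hm.prop, fun x hx => (hch.total hx hm.prop).elim (hm.le_of_le hx) id⟩

theorem IsFront.exists_le_of_mem_maxIn {Y : Set α} (hY : IsFront B Y) {μ : α}
    (hμ : μ ∈ maxIn B) : ∃ y ∈ Y, y ≤ μ := by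
  obtain ⟨y, hy, hyμ | hμy⟩ := hY.2.2 μ hμ.1
  · exact ⟨y, hy, hyμ⟩
  · exact ⟨y, hy, (eq_of_mem_maxIn hμ (hY.1 hy) hμy).ge⟩

namespace CWT

theorem comparable (h : CWT M B) {x y z : α} (hx : x ∈ B) (hy : y ∈ B) (hz : z ∈ B)
    (hxz : x ≤ z) (hyz : y ≤ z) : x ≤ y ∨ y ≤ x :=
  h.2.2.2.1 z hz x hx y hy hxz hyz

theorem finite_of_isChain (h : CWT M B) (hT : T ⊆ B) (hch : IsChain (· ≤ ·) T) : T.Finite :=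
  h.2.2.2.2.1 T hT hch

theorem succIn_eq_empty_or_infinite (h : CWT M B) {ν : α} (hν : ν ∈ B) :
    succIn B ν = ∅ ∨ (succIn B ν).Infinite :=
  h.2.2.2.2.2.1 ν hν

theorem infinite_succIn_avoid (h : CWT M B) {ν : α} (hν : ν ∈ B \ maxIn B) (F : Finset α)
    (hF : (F : Set α) ⊆ M \ {ρ | ρ ≤ ν}) :
    {ϱ ∈ succIn B ν | ∀ ρ ∈ F, ¬Compat M ρ ϱ}.Infinite :=
  h.2.2.2.2.2.2.2 ν hν F hF

theorem isChain_of_forall_le (h : CWT M B) (hT : T ⊆ B) {z : α} (hz : z ∈ B)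
    (hTz : ∀ x ∈ T, x ≤ z) : IsChain (· ≤ ·) T :=
  fun x hx y hy _ => h.comparable (hT hx) (hT hy) hz (hTz x hx) (hTz y hy)

theorem exists_isGreatest (h : CWT M B) (hT : T ⊆ B) {z : α} (hz : z ∈ B)
    (hTz : ∀ x ∈ T, x ≤ z) (hne : T.Nonempty) : ∃ m, IsGreatest T m :=
  have hch := h.isChain_of_forall_le hT hz hTz
  hch.exists_isGreatest (h.finite_of_isChain hT hch) hne

theorem exists_isLeast (h : CWT M B) (hT : T ⊆ B) {z : α} (hz : z ∈ B)
    (hTz : ∀ x ∈ T, x ≤ z) (hne : T.Nonempty) : ∃ m, IsLeast T m :=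
  have hch := h.isChain_of_forall_le hT hz hTz
  hch.exists_isLeast (h.finite_of_isChain hT hch) hne

theorem exists_succIn_le (h : CWT M B) (hS : S ⊆ B) {b y : α} (hy : y ∈ S) (hby : b < y) :
    ∃ a ∈ succIn S b, a ≤ y := by
  obtain ⟨a, ⟨haS, hba, hay⟩, hleast⟩ := h.exists_isLeast (T := {x ∈ S | b < x ∧ x ≤ y})
    (fun x hx => hS hx.1) (hS hy) (fun x hx => hx.2.2) ⟨y, hy, hby, le_rfl⟩
  exact ⟨a, ⟨haS, hba, fun ⟨e, heS, hbe, hea⟩ =>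
    hea.not_ge (hleast ⟨heS, hbe, hea.le.trans hay⟩)⟩, hay⟩

theorem exists_le_mem_maxIn (h : CWT M B) (hSB : S ⊆ B) {ν : α} (hν : ν ∈ S) :
    ∃ μ ∈ maxIn S, ν ≤ μ := by
  obtain ⟨μ, hμ⟩ := zorn_le₀ {x ∈ S | ν ≤ x} fun C hC hch => by
    rcases C.eq_empty_or_nonempty with rfl | hne
    · exact ⟨ν, ⟨hν, le_rfl⟩, by simp⟩
    · obtain ⟨m, hmC, hm⟩ :=
        hch.exists_isGreatest (h.finite_of_isChain (fun x hx => hSB (hC hx).1) hch) hne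
      exact ⟨m, hC hmC, hm⟩
  exact ⟨μ, ⟨hμ.prop.1, fun x hx hμx => hμ.not_gt ⟨hx, hμ.prop.2.trans hμx.le⟩ hμx⟩, hμ.prop.2⟩

theorem le_of_lt_of_mem_succIn (h : CWT M B) {ρ x e : α} (hρ : ρ ∈ B) (hx : x ∈ succIn B ρ)
    (he : e ∈ B) (hex : e < x) : e ≤ ρ := by
  rcases h.comparable he hρ hx.1 hex.le hx.2.1.le with heρ | hρe
  · exact heρ
  rcases hρe.eq_or_lt with rfl | hρe
  · exact le_rfl
  · exact (hx.2.2 ⟨e, he, hρe, hex⟩).elim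

theorem eq_of_mem_succIn_of_le (h : CWT M B) {ρ x y a : α} (hx : x ∈ succIn B ρ)
    (hy : y ∈ succIn B ρ) (ha : a ∈ B) (hxa : x ≤ a) (hya : y ≤ a) : x = y := by
  rcases h.comparable hx.1 hy.1 ha hxa hya with hxy | hyx
  · exact hxy.eq_or_lt.resolve_right fun hlt => hy.2.2 ⟨x, hx.1, hx.2.1, hlt⟩
  · exact (hyx.eq_or_lt.resolve_right fun hlt => hx.2.2 ⟨y, hy.1, hy.2.1, hlt⟩).symm

theorem finite_of_forall_exists_le (h : CWT M B) {ρ : α} (hS : S ⊆ succIn B ρ) (hT : T.Finite)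
    (hTB : T ⊆ B) (hST : ∀ x ∈ S, ∃ a ∈ T, x ≤ a) : S.Finite := by
  choose! g hgT hg using hST
  refine hT.of_injOn (fun x hx => hgT x hx) fun x hx y hy hxy => ?_
  exact h.eq_of_mem_succIn_of_le (hS hx) (hS hy) (hTB (hgT x hx)) (hg x hx) (hxy ▸ hg y hy)

theorem of_subset (h : CWT M B) (hSB : S ⊆ B) (hroot : ∃ r, IsRoot S r)
    (hsucc : ∀ ν ∈ S, succIn S ν = ∅ ∨ (succIn S ν).Infinite)
    (havoid : ∀ ν ∈ S \ maxIn S, ∀ F : Finset α, (F : Set α) ⊆ M \ {ρ | ρ ≤ ν} →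
      {ϱ ∈ succIn S ν | ∀ ρ ∈ F, ¬Compat M ρ ϱ}.Infinite) : CWT M S :=
  ⟨hSB.trans h.1, h.2.1.mono hSB, hroot,
    fun ν hν η hη ρ hρ => h.2.2.2.1 ν (hSB hν) η (hSB hη) ρ (hSB hρ),
    fun _ hC => h.finite_of_isChain (hC.trans hSB), hsucc,
    fun η hη ν hν => h.2.2.2.2.2.2.1 η (hSB hη) ν (hSB hν), havoid⟩

theorem of_subset_of_finite_diff (h : CWT M B) (hSB : S ⊆ B) (hroot : ∃ r, IsRoot S r)
    (hsucc : ∀ ν ∈ S, succIn S ν = succIn B ν ∩ S)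
    (hfin : ∀ ν ∈ S, (succIn B ν \ S).Finite) : CWT M S := by
  refine h.of_subset hSB hroot (fun ν hν => ?_) fun ν ⟨hνS, hνmax⟩ F hF => ?_
  · rw [hsucc ν hν, ← sdiff_sdiff_right_self]
    exact (h.succIn_eq_empty_or_infinite (hSB hν)).imp (fun hempty => by simp [hempty])
      (·.sdiff (hfin ν hν))
  · have hνB : ν ∉ maxIn B := fun hm => hνmax (mem_maxIn_of_subset hm hνS hSB)
    refine ((h.infinite_succIn_avoid ⟨hSB hνS, hνB⟩ F hF).sdiff (hfin ν hνS)).mono ?_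
    rintro x ⟨⟨hx, hxF⟩, hxS⟩
    rw [hsucc ν hνS]
    exact ⟨⟨hx, by_contra fun hxS' => hxS ⟨hx, hxS'⟩⟩, hxF⟩

theorem cone (h : CWT M B) {η : α} (hη : η ∈ B) : CWT M (B ∩ {ρ | η ≤ ρ}) := by
  have hsub : ∀ ν ∈ B ∩ {ρ | η ≤ ρ}, succIn B ν ⊆ B ∩ {ρ | η ≤ ρ} :=
    fun ν hν x hx => ⟨hx.1, hν.2.trans hx.2.1.le⟩
  refine h.of_subset_of_finite_diff inter_subset_left ⟨η, isRoot_cone hη⟩ (fun ν hν => ?_)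
    fun ν hν => ?_
  · rw [succIn_inter_cone hν, inter_eq_left.2 (hsub ν hν)]
  · rw [sdiff_eq_empty.2 (hsub ν hν)]
    exact finite_empty

end CWT

theorem isFront_inter_of_forall_maxIn (hB : CWT M B) {Y : Set α} (hY : IsAntichain (· ≤ ·) Y)
    (h : ∀ μ ∈ maxIn B, ∃ y ∈ Y ∩ B, y ≤ μ) : IsFront B (Y ∩ B) := by
  refine ⟨inter_subset_right, hY.subset inter_subset_left, fun ν hν => ?_⟩
  obtain ⟨μ, hμ, hνμ⟩ := hB.exists_le_mem_maxIn subset_rfl hν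
  obtain ⟨y, hy, hyμ⟩ := h μ hμ
  exact ⟨y, hy, hB.comparable hy.2 hν hμ.1 hyμ hνμ⟩

theorem sb_self (hB : CWT M B) : sb M B B := by
  obtain ⟨r, hr⟩ := hB.2.2.1
  exact ⟨hB, subset_rfl, ⟨r, hr, hr⟩, fun _ _ => ⟨subset_rfl, by simp⟩⟩

theorem isAlmostFront_maxIn (hB : CWT M B) : IsAlmostFront M B (maxIn B) :=
  ⟨fun _ hx => hB.1 hx.1, isAntichain_maxIn, B, sb_self hB,
    isFront_inter_of_forall_maxIn hB isAntichain_maxIn fun μ hμ => ⟨μ, ⟨hμ, hμ.1⟩, le_rfl⟩⟩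

end Trees

section Subtrees

variable [PartialOrder α] {M B B' S : Set α}

theorem IsLowerIn.inter {A C : Set α} (hA : IsLowerIn B A) (hC : IsLowerIn B C) :
    IsLowerIn B (A ∩ C) :=
  fun x hx y hy hxy => ⟨hA x hx y hy.1 hxy, hC x hx y hy.2 hxy⟩

theorem isLowerIn_of_succIn_subset (hB : CWT M B) (hB'B : B' ⊆ B) {r : α} (hr : IsRoot B r)
    (hrB' : r ∈ B') (hsucc : ∀ ν ∈ B', ∀ y ∈ B', ν < y → succIn B' ν ⊆ succIn B ν) :
    IsLowerIn B B' := by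
  intro x hx y hy hxy
  obtain ⟨m, ⟨hmB', hmx⟩, hm⟩ := hB.exists_isGreatest (T := {z ∈ B' | z ≤ x})
    (fun z hz => hB'B hz.1) hx (fun z hz => hz.2) ⟨r, hrB', hr.2 x hx⟩
  rcases hmx.eq_or_lt with rfl | hmx
  · exact hmB'
  obtain ⟨n, hn, hny⟩ := hB.exists_succIn_le hB'B hy (hmx.trans_le hxy)
  have hnB := hsucc m hmB' y hy (hmx.trans_le hxy) hn
  rcases hB.comparable hx (hB'B hn.1) (hB'B hy) hxy hny with hxn | hnx
  · rcases hxn.eq_or_lt with rfl | hxn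
    · exact hn.1
    · exact (hnB.2.2 ⟨x, hx, hmx, hxn⟩).elim
  · exact ((hm ⟨hn.1, hnx⟩).not_gt hn.2.1).elim

namespace sb

theorem isLowerIn (hB : CWT M B) (h : sb M B B') : IsLowerIn B B' := by
  obtain ⟨r, hr, hr'⟩ := h.2.2.1
  exact isLowerIn_of_succIn_subset hB h.2.1 hr hr'.1 fun ν hν _ _ _ => (h.2.2.2 ν hν).1

theorem mem_maxIn (hB : CWT M B) (h : sb M B B') {μ : α} (hμ : μ ∈ maxIn B') :
    μ ∈ maxIn B := by
  refine ⟨h.2.1 hμ.1, fun b hb hμb => ?_⟩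
  obtain ⟨n, hn, -⟩ := hB.exists_succIn_le subset_rfl hb hμb
  have hinf := (hB.succIn_eq_empty_or_infinite (h.2.1 hμ.1)).resolve_left
    (nonempty_iff_ne_empty.1 ⟨n, hn⟩)
  obtain ⟨x, hx, hx'⟩ := (hinf.sdiff (h.2.2.2 μ hμ.1).2).nonempty
  have hxB' : x ∈ succIn B' μ := by_contra fun hn => hx' ⟨hx, hn⟩
  exact hμ.2 x hxB'.1 hxB'.2.1

end sb

namespace psb

theorem isLowerIn (hB : CWT M B) (h : psb M B B') : IsLowerIn B B' := by
  obtain ⟨r, hr, hr'⟩ := h.2.2.1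
  exact isLowerIn_of_succIn_subset hB h.2.1 hr hr'.1 fun ν hν y hy hνy =>
    (h.2.2.2 ν ⟨hν, fun hm => hm.2 y (h.2.1 hy) hνy⟩).2

theorem mem_maxIn (h : psb M B B') {μ : α} (hμ : μ ∈ maxIn B') : μ ∈ maxIn B := by
  by_contra hμB
  obtain ⟨x, hx⟩ := (h.2.2.2 μ ⟨hμ.1, hμB⟩).1.nonempty
  exact hμ.2 x hx.1 hx.2.1

end psb

theorem sb_of_isLowerIn (hB : CWT M B) (hSB : S ⊆ B) (hS : IsLowerIn B S) {r : α}
    (hr : IsRoot B r) (hrS : r ∈ S) (hfin : ∀ ν ∈ S, (succIn B ν \ S).Finite) : sb M B S := by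
  have hsucc := succIn_eq_inter_of_isLowerIn hSB hS
  have hrootS : IsRoot S r := ⟨hrS, fun x hx => hr.2 x (hSB hx)⟩
  refine ⟨hB.of_subset_of_finite_diff hSB ⟨r, hrootS⟩ (fun ν _ => hsucc ν) hfin, hSB,
    ⟨r, hr, hrootS⟩, fun ν hν => ⟨?_, ?_⟩⟩
  · rw [hsucc]
    exact inter_subset_left
  · rw [hsucc, sdiff_self_inter]
    exact hfin ν hν

theorem sb_inter (hB : CWT M B) {A C : Set α} (hA : sb M B A) (hC : sb M B C) :
    sb M B (A ∩ C) := by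
  obtain ⟨r, hr, hrA⟩ := hA.2.2.1
  obtain ⟨r', hr', hrC⟩ := hC.2.2.1
  refine sb_of_isLowerIn hB (inter_subset_left.trans hA.2.1)
    ((hA.isLowerIn hB).inter (hC.isLowerIn hB)) hr ⟨hrA.1, hr'.eq hr ▸ hrC.1⟩ fun ν hν => ?_
  refine ((hA.2.2.2 ν hν.1).2.union (hC.2.2.2 ν hν.2).2).subset ?_
  rintro x ⟨hx, hxAC⟩
  by_cases hxA : x ∈ A
  · exact Or.inr ⟨hx, fun hxC => hxAC ⟨hxA, hxC.1⟩⟩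
  · exact Or.inl ⟨hx, fun hxA' => hxA hxA'.1⟩

end Subtrees

section LeafFronted

variable [PartialOrder α] {M B₁ W F : Set α}

/-- The situation that `B₁ ≤*_M B₂` produces inside an exhaustive subtree `W` of `B₂`, and that
passes to cones. -/
structure LeafFronted (M B₁ W : Set α) : Prop where
  cwt₁ : CWT M B₁
  cwt : CWT M W
  root : ∃ r, IsRoot B₁ r ∧ IsRoot W r
  isFront : IsFront W (maxIn B₁ ∩ W)
  isLowerIn : IsLowerIn B₁ (W ∩ B₁)

def leafExtension (B₁ W F : Set α) : Set α :=
  {ν ∈ W | ∃ f ∈ F, ν ≤ f ∨ (f ∈ maxIn B₁ ∧ f ≤ ν)}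

theorem isLowerIn_leafExtension (hW : CWT M W) (hFW : F ⊆ W) :
    IsLowerIn W (leafExtension B₁ W F) := by
  rintro e he x ⟨hxW, f, hfF, hxf | ⟨hf, hfx⟩⟩ hex
  · exact ⟨he, f, hfF, Or.inl (hex.trans hxf)⟩
  · exact ⟨he, f, hfF, (hW.comparable he (hFW hfF) hxW hex hfx).imp_right (⟨hf, ·⟩)⟩

namespace LeafFronted

theorem not_mem_maxIn (h : LeafFronted M B₁ W) {q : α} (hq : q ∈ W ∩ B₁)
    (hq₁ : q ∉ maxIn B₁) : q ∉ maxIn W := by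
  intro hqW
  obtain ⟨z, ⟨hz₁, hzW⟩, hzq | hqz⟩ := h.isFront.2.2 q hq.1
  · exact hq₁ (eq_of_mem_maxIn hz₁ hq.2 hzq ▸ hz₁)
  · exact hq₁ ((eq_of_mem_maxIn hqW hzW hqz).symm ▸ hz₁)

theorem exists_succIn_le (h : LeafFronted M B₁ W) {ν b : α} (hν : ν ∈ W) (hb : b ∈ W ∩ B₁)
    (hb₁ : b ∉ maxIn B₁) (hbν : b < ν) (hgr : ∀ x ∈ W ∩ B₁, x < ν → x ≤ b) :
    ∃ a ∈ succIn (W ∩ B₁) b, ν ≤ a := by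
  obtain ⟨z, ⟨hz₁, hzW⟩, hcmp⟩ := h.isFront.2.2 ν hν
  -- a leaf of `B₁` strictly below `ν` would lie below `b`
  have hνz : ν ≤ z := by
    rcases hcmp with hzν | hνz
    · rcases hzν.eq_or_lt with rfl | hzν
      · exact le_rfl
      · exact absurd (eq_of_mem_maxIn hz₁ hb.2 (hgr z ⟨hzW, hz₁.1⟩ hzν) ▸ hz₁) hb₁
    · exact hνz
  obtain ⟨a, ha, haz⟩ := h.cwt.exists_succIn_le inter_subset_left ⟨hzW, hz₁.1⟩
    (hbν.trans_le hνz)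
  refine ⟨a, ha, ?_⟩
  rcases h.cwt.comparable hν ha.1.1 hzW hνz haz with hνa | haν
  · exact hνa
  · rcases haν.eq_or_lt with rfl | haν
    · exact le_rfl
    · exact ((hgr a ha.1 haν).not_gt ha.2.1).elim

theorem infinite_succIn_avoid (h : LeafFronted M B₁ W) {q : α} (hq : q ∈ W ∩ B₁)
    (hq₁ : q ∉ maxIn B₁) (F : Finset α) (hF : (F : Set α) ⊆ M \ {ρ | ρ ≤ q}) :
    {a ∈ succIn (W ∩ B₁) q | ∀ ρ ∈ F, ¬Compat M ρ a}.Infinite := by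
  intro hfin
  refine h.cwt.infinite_succIn_avoid ⟨hq.1, h.not_mem_maxIn hq hq₁⟩ F hF
    (h.cwt.finite_of_forall_exists_le (fun σ hσ => hσ.1) hfin (fun a ha => ha.1.1.1) ?_)
  rintro σ ⟨hσ, hσF⟩
  obtain ⟨a, ha, hσa⟩ := h.exists_succIn_le hσ.1 hq hq₁ hσ.2.1
    fun x hx hxσ => h.cwt.le_of_lt_of_mem_succIn hq.1 hσ hx.1 hxσ
  exact ⟨a, ⟨ha, fun ρ hρ ⟨u, huM, hρu, hau⟩ => hσF ρ hρ ⟨u, huM, hρu, hσa.trans hau⟩⟩, hσa⟩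

theorem infinite_succIn (h : LeafFronted M B₁ W) {q : α} (hq : q ∈ W ∩ B₁)
    (hq₁ : q ∉ maxIn B₁) : (succIn (W ∩ B₁) q).Infinite :=
  (h.infinite_succIn_avoid hq hq₁ ∅ (by simp)).mono fun _ ha => ha.1

theorem psb (h : LeafFronted M B₁ W) : psb M B₁ (W ∩ B₁) := by
  obtain ⟨r, hr₁, hrW⟩ := h.root
  have hr : IsRoot (W ∩ B₁) r := ⟨⟨hrW.1, hr₁.1⟩, fun x hx => hr₁.2 x hx.2⟩
  have hcwt : CWT M (W ∩ B₁) := by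
    refine h.cwt.of_subset inter_subset_left ⟨r, hr⟩ (fun q hq => ?_) fun q hq F hF => ?_
    · refine (succIn (W ∩ B₁) q).eq_empty_or_nonempty.imp_right fun ⟨x, hx⟩ => ?_
      exact h.infinite_succIn hq fun hm => hm.2 x hx.1.2 hx.2.1
    · obtain ⟨x, hx, hqx⟩ : ∃ x ∈ W ∩ B₁, q < x := by
        by_contra! hmax
        exact hq.2 ⟨hq.1, hmax⟩
      exact h.infinite_succIn_avoid hq.1 (fun hm => hm.2 x hx.2 hqx) F hF
  refine ⟨hcwt, inter_subset_right, ⟨r, hr₁, hr⟩,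
    fun q ⟨hq, hq₁⟩ => ⟨h.infinite_succIn hq hq₁, ?_⟩⟩
  rw [succIn_eq_inter_of_isLowerIn inter_subset_right h.isLowerIn]
  exact inter_subset_left

theorem finite_succIn_sdiff_leafExtension (h : LeafFronted M B₁ W) (hF : sb M (W ∩ B₁) F)
    {ρ : α} (hρ : ρ ∈ leafExtension B₁ W F) :
    (succIn W ρ \ leafExtension B₁ W F).Finite := by
  have above_leaf : ∀ f ∈ F, f ∈ maxIn B₁ → f ≤ ρ →
      (succIn W ρ \ leafExtension B₁ W F).Finite := fun f hfF hf hfρ =>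
    finite_empty.subset fun x hx => hx.2 ⟨hx.1.1, f, hfF, Or.inr ⟨hf, hfρ.trans hx.1.2.1.le⟩⟩
  obtain ⟨hρW, f, hfF, hρf | ⟨hf, hfρ⟩⟩ := hρ
  swap
  · exact above_leaf f hfF hf hfρ
  obtain ⟨r, hr₁, hrW⟩ := h.root
  obtain ⟨b, ⟨hbp, hbρ⟩, hb⟩ := h.cwt.exists_isGreatest (T := {x ∈ W ∩ B₁ | x ≤ ρ})
    (fun x hx => hx.1.1) hρW (fun x hx => hx.2) ⟨r, ⟨hrW.1, hr₁.1⟩, hrW.2 ρ hρW⟩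
  have hbF : b ∈ F := hF.isLowerIn h.psb.1 b hbp f hfF (hbρ.trans hρf)
  by_cases hb₁ : b ∈ maxIn B₁
  · exact above_leaf b hbF hb₁ hbρ
  -- a discarded successor of `ρ` lies below a successor of `b` that `F` discards
  refine h.cwt.finite_of_forall_exists_le (fun x hx => hx.1) (hF.2.2.2 b hbF).2
    (fun a ha => ha.1.1.1) ?_
  rintro x ⟨hx, hxV⟩
  obtain ⟨a, ha, hxa⟩ := h.exists_succIn_le hx.1 hbp hb₁ (hbρ.trans_lt hx.2.1)
    fun e he hex => hb ⟨he, h.cwt.le_of_lt_of_mem_succIn hρW hx he.1 hex⟩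
  exact ⟨a, ⟨ha, fun haF => hxV ⟨hx.1, a, haF.1, Or.inl hxa⟩⟩, hxa⟩

theorem sb_leafExtension (h : LeafFronted M B₁ W) (hF : sb M (W ∩ B₁) F) :
    sb M W (leafExtension B₁ W F) := by
  obtain ⟨r, -, hrW⟩ := h.root
  obtain ⟨r', -, hr'F⟩ := hF.2.2.1
  have hFW : F ⊆ W := fun x hx => (hF.2.1 hx).1
  exact sb_of_isLowerIn h.cwt (sep_subset _ _) (isLowerIn_leafExtension h.cwt hFW) hrW
    ⟨hrW.1, r', hr'F.1, Or.inl (hrW.2 r' (hFW hr'F.1))⟩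
    fun ρ hρ => h.finite_succIn_sdiff_leafExtension hF hρ

theorem isFront_leafExtension (h : LeafFronted M B₁ W) (hF : sb M (W ∩ B₁) F) {Y : Set α}
    (hY : IsAntichain (· ≤ ·) Y) (hYF : IsFront F (Y ∩ F)) :
    IsFront (leafExtension B₁ W F) (Y ∩ leafExtension B₁ W F) := by
  have hFV : F ⊆ leafExtension B₁ W F := fun f hf => ⟨(hF.2.1 hf).1, f, hf, Or.inl le_rfl⟩
  refine isFront_inter_of_forall_maxIn (h.sb_leafExtension hF).1 hY fun μ hμ => ?_
  obtain ⟨f, hf, hfμ⟩ : ∃ f ∈ maxIn F, f ≤ μ := by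
    obtain ⟨-, f, hfF, hμf | ⟨hf₁, hfμ⟩⟩ := hμ.1
    · obtain rfl := eq_of_mem_maxIn hμ (hFV hfF) hμf
      exact ⟨μ, mem_maxIn_of_subset hμ hfF hFV, le_rfl⟩
    · exact ⟨f, mem_maxIn_of_subset hf₁ hfF fun x hx => (hF.2.1 hx).2, hfμ⟩
  obtain ⟨y, ⟨hyY, hyF⟩, hyf⟩ := hYF.exists_le_of_mem_maxIn hf
  exact ⟨y, ⟨hyY, hFV hyF⟩, hyf.trans hfμ⟩

theorem isAlmostFront (h : LeafFronted M B₁ W) {Y : Set α}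
    (hY : IsAlmostFront M (W ∩ B₁) Y) : IsAlmostFront M W Y := by
  obtain ⟨hYM, hYanti, F, hF, hYF⟩ := hY
  exact ⟨hYM, hYanti, _, h.sb_leafExtension hF, h.isFront_leafExtension hF hYanti hYF⟩

theorem leStar (h : LeafFronted M B₁ W) : leStar M B₁ W :=
  ⟨h.cwt₁, h.cwt, h.root, W, sb_self h.cwt, h.psb, fun _ => h.isAlmostFront⟩

theorem cone (h : LeafFronted M B₁ W) {η : α} (hη : η ∈ W ∩ B₁) :
    LeafFronted M (B₁ ∩ {ρ | η ≤ ρ}) (W ∩ {ρ | η ≤ ρ}) := by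
  refine ⟨h.cwt₁.cone hη.2, h.cwt.cone hη.1, ⟨η, isRoot_cone hη.2, isRoot_cone hη.1⟩, ?_,
    fun x hx y hy hxy => ⟨⟨(h.isLowerIn x hx.1 y ⟨hy.1.1, hy.2.1⟩ hxy).1, hx.2⟩, hx⟩⟩
  rw [maxIn_inter_cone]
  refine ⟨fun x hx => hx.2, isAntichain_maxIn.subset fun x hx => hx.1.1, fun ν hν => ?_⟩
  obtain ⟨z, ⟨hz₁, hzW⟩, hcmp⟩ := h.isFront.2.2 ν hν.1
  have hηz : η ≤ z := by
    rcases hcmp with hzν | hνz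
    · exact (h.cwt.comparable hη.1 hzW hν.1 hν.2 hzν).elim id
        fun hzη => (eq_of_mem_maxIn hz₁ hη.2 hzη).ge
    · exact hν.2.trans hνz
  exact ⟨z, ⟨⟨hz₁, hηz⟩, hzW, hηz⟩, hcmp⟩

theorem isFront_inter (h : LeafFronted M B₁ W) {Y : Set α} (hY : IsFront B₁ Y) :
    IsFront W (Y ∩ W) := by
  refine isFront_inter_of_forall_maxIn h.cwt hY.2.1 fun μ hμ => ?_
  obtain ⟨z, ⟨hz₁, hzW⟩, hzμ⟩ := h.isFront.exists_le_of_mem_maxIn hμ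
  obtain ⟨y, hyY, hyz⟩ := hY.exists_le_of_mem_maxIn hz₁
  exact ⟨y, ⟨hyY, (h.isLowerIn y (hY.1 hyY) z ⟨hzW, hz₁.1⟩ hyz).1⟩, hyz.trans hzμ⟩

end LeafFronted

theorem leStar.exists_sb_leafFronted {B₂ : Set α} (hle : leStar M B₁ B₂) :
    ∃ W, sb M B₂ W ∧ LeafFronted M B₁ W := by
  obtain ⟨h₁, h₂, ⟨r, hr₁, hr₂⟩, B₂', hB₂', hP, htrans⟩ := hle
  obtain ⟨-, -, W₀, hW₀, hW₀front⟩ := htrans _ (isAlmostFront_maxIn hP.1)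
  have hW := sb_inter h₂ hW₀ hB₂'
  obtain ⟨r', hr'₂, hr'W⟩ := hW.2.2.1
  refine ⟨W₀ ∩ B₂', hW, h₁, hW.1, ⟨r, hr₁, hr'₂.eq hr₂ ▸ hr'W⟩, ?_, fun x hx y hy hxy => ?_⟩
  · refine isFront_inter_of_forall_maxIn hW.1 isAntichain_maxIn fun μ hμ => ?_
    obtain ⟨q, ⟨hqP, hqW₀⟩, hqμ⟩ := hW₀front.exists_le_of_mem_maxIn
      (mem_maxIn_of_subset (hW.mem_maxIn h₂ hμ) hμ.1.1 hW₀.2.1)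
    exact ⟨q, ⟨hP.mem_maxIn hqP, hW.isLowerIn h₂ q (hW₀.2.1 hqW₀) μ hμ.1 hqμ⟩, hqμ⟩
  · have hxP := hP.isLowerIn h₁ x hx y ⟨hy.1.2, hy.2⟩ hxy
    exact ⟨hW.isLowerIn h₂ x (hB₂'.2.1 hxP.1) y hy.1 hxy, hx⟩

end LeafFronted

theorem leStar_front_restrict_general [PartialOrder α] (M B₁ B₂ : Set α)
    (hle : leStar M B₁ B₂)
    (Y : Set α) (hY : IsFront B₁ Y) :
    ∃ B₂', sb M B₂ B₂' ∧ IsFront B₂' (Y ∩ B₂') ∧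
      ∀ η ∈ Y ∩ B₂', leStar M (B₁ ∩ {ρ | η ≤ ρ}) (B₂' ∩ {ρ | η ≤ ρ}) := by
  obtain ⟨W, hW, h⟩ := hle.exists_sb_leafFronted
  exact ⟨W, hW, h.isFront_inter hY, fun η hη => (h.cone ⟨hη.2, hY.1 hη.1⟩).leStar⟩

/-- if `B₁ ≤*_M B₂` and `Y` is a front of `B₁`, then there is `B₂' ∈ sb(B₂)`
such that `Y ∩ B₂'` is a front of `B₂'` and `(B₁)_{≥η} ≤*_M (B₂')_{≥η}` for all
`η ∈ Y ∩ B₂'`. -/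
theorem leStar_front_restrict [PartialOrder α] (M B₁ B₂ : Set α)
    (h₁ : CWT M B₁) (h₂ : CWT M B₂) (hle : leStar M B₁ B₂)
    (Y : Set α) (hY : IsFront B₁ Y) :
    ∃ B₂', sb M B₂ B₂' ∧ IsFront B₂' (Y ∩ B₂') ∧
      ∀ η ∈ Y ∩ B₂', leStar M (B₁ ∩ {ρ | η ≤ ρ}) (B₂' ∩ {ρ | η ≤ ρ}) :=
  leStar_front_restrict_general M B₁ B₂ hle Y hY
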